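/- arXiv:1808.02404 — 2 statements merged into one kernel-verified Lean document; each statement's English description precedes it below -/
import Mathlib

section
/- Let G act on the Cantor set X with no nontrivial G-invariant Borel measure, and suppose the action has paradoxical comparison. Then the type semigroup W(X,G) is purely infinite: 2[f] ≤ [f] for every [f] ∈ W(X,G). -/
/-!
Every `f ∈ C(X, ℕ)` is the layer-cake sum `∑ᵢ 1_{f > i}` of indicators of clopen sets, and
`2a ≤ a` is stable under sums, so it suffices to treat `a = [1_A]` with `A` clopen. Paradoxical
comparison with `F = O = A` gives disjoint open `O₁, O₂ ⊆ A` with `A ≺ Oᵢ`. In a profinite space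
the open cover witnessing `A ≺ Oᵢ` refines to disjoint clopen pieces of `A`, whose translates
form a clopen `Bᵢ ⊆ Oᵢ` with `[1_A] = [1_{Bᵢ}]`. Hence
`2[1_A] = [1_{B₁ ∪ B₂}]`, and `[1_{B₁ ∪ B₂}] + [1_{A \ (B₁ ∪ B₂)}] = [1_A]`.
-/

open Pointwise MeasureTheory

def Subeq (G : Type*) {X : Type*} [Group G] [MulAction G X] [TopologicalSpace X]
    (F O : Set X) : Prop :=
  ∃ (n : ℕ) (U : Fin n → Set X) (g : Fin n → G),
    (∀ i, IsOpen (U i)) ∧ F ⊆ ⋃ i, U i ∧ (∀ i, g i • U i ⊆ O) ∧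
      Pairwise fun i j => Disjoint (g i • U i) (g j • U j)

def ParadoxicalComparison (G : Type*) {X : Type*} [Group G] [MulAction G X]
    [TopologicalSpace X] : Prop :=
  ∀ O : Set X, IsOpen O → O.Nonempty → ∀ F : Set X, IsClosed F → F ⊆ O →
    ∃ O₁ O₂ : Set X, IsOpen O₁ ∧ IsOpen O₂ ∧ O₁.Nonempty ∧ O₂.Nonempty ∧
      O₁ ⊆ O ∧ O₂ ⊆ O ∧ Disjoint O₁ O₂ ∧ Subeq G F O₁ ∧ Subeq G F O₂

/-- The equivalence relation defining the type semigroup `W(X,G)`. -/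
def TypeRel (G : Type*) {X : Type*} [Group G] [TopologicalSpace X] [MulAction G X]
    [ContinuousConstSMul G X] (f g : C(X, ℕ)) : Prop :=
  ∃ (n : ℕ) (h : Fin n → C(X, ℕ)) (s : Fin n → G),
    (∑ i, h i) = f ∧
      (∑ i, (h i).comp ⟨fun x => (s i)⁻¹ • x, continuous_const_smul _⟩) = g

open Set Function

section Profinite

variable {X : Type*} [TopologicalSpace X] [CompactSpace X] [T2Space X]
  [TotallyDisconnectedSpace X]

theorem IsCompact.exists_isClopen_subset_of_subset_iUnion {ι : Type*} {A : Set X}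
    (hA : IsCompact A) {U : ι → Set X} (hU : ∀ i, IsOpen (U i)) (hAU : A ⊆ ⋃ i, U i) :
    ∃ V : ι → Set X, (∀ i, IsClopen (V i)) ∧ (∀ i, V i ⊆ U i) ∧ A ⊆ ⋃ i, V i := by
  classical
  -- Clopen shrinkings of `U` are directed under pointwise union, so compactness yields one.
  let S := {V : ι → Set X // ∀ i, IsClopen (V i) ∧ V i ⊆ U i}
  have : Nonempty S := ⟨⟨fun _ => ∅, fun _ => ⟨isClopen_empty, empty_subset _⟩⟩⟩
  have hcover : A ⊆ ⋃ V : S, ⋃ i, V.1 i := by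
    intro x hx
    obtain ⟨i, hxi⟩ := mem_iUnion.mp (hAU hx)
    obtain ⟨W, hW, hxW, hWU⟩ := compact_exists_isClopen_in_isOpen (hU i) hxi
    refine mem_iUnion.mpr ⟨⟨fun j => if j = i then W else ∅, fun j => ?_⟩,
      mem_iUnion.mpr ⟨i, by simpa using hxW⟩⟩
    dsimp only
    split_ifs with h
    · exact ⟨hW, h ▸ hWU⟩
    · exact ⟨isClopen_empty, empty_subset _⟩
  have hdirected : Directed (· ⊆ ·) fun V : S => ⋃ i, V.1 i := fun V V' =>
    ⟨⟨fun i => V.1 i ∪ V'.1 i,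
      fun i => ⟨(V.2 i).1.union (V'.2 i).1, union_subset (V.2 i).2 (V'.2 i).2⟩⟩,
      iUnion_mono fun _ => subset_union_left, iUnion_mono fun _ => subset_union_right⟩
  obtain ⟨V, hAV⟩ := hA.elim_directed_cover _
    (fun V => isOpen_iUnion fun i => (V.2 i).1.isOpen) hcover hdirected
  exact ⟨V.1, fun i => (V.2 i).1, fun i => (V.2 i).2, hAV⟩

theorem IsCompact.exists_pairwise_disjoint_isClopen_subset_of_subset_iUnion {ι : Type*}
    [LinearOrder ι] [LocallyFiniteOrderBot ι] {A : Set X} (hA : IsCompact A)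
    {U : ι → Set X} (hU : ∀ i, IsOpen (U i)) (hAU : A ⊆ ⋃ i, U i) :
    ∃ V : ι → Set X, (∀ i, IsClopen (V i)) ∧ (∀ i, V i ⊆ U i) ∧ A ⊆ ⋃ i, V i ∧
      Pairwise (Disjoint on V) := by
  obtain ⟨V, hV, hVU, hAV⟩ := hA.exists_isClopen_subset_of_subset_iUnion hU hAU
  refine ⟨disjointed V, fun i => ?_, fun i => (disjointed_subset V i).trans (hVU i),
    by rwa [iUnion_disjointed], disjoint_disjointed V⟩
  rw [disjointed_apply, Finset.sup_set_eq_biUnion]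
  exact (hV i).diff (isClopen_biUnion_finset fun j _ => hV j)

end Profinite

theorem IsClopen.smul {G X : Type*} [Group G] [TopologicalSpace X] [MulAction G X]
    [ContinuousConstSMul G X] {A : Set X} (hA : IsClopen A) (g : G) : IsClopen (g • A) :=
  ⟨hA.1.smul g, hA.2.smul g⟩

section ClopenIndicator

variable {X : Type*} [TopologicalSpace X]

noncomputable def clopenIndicator (A : Set X) (hA : IsClopen A) : C(X, ℕ) :=
  ⟨A.indicator 1, hA.continuous_indicator continuous_const⟩

@[simp]
theorem clopenIndicator_apply (A : Set X) (hA : IsClopen A) (x : X) :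
    clopenIndicator A hA x = A.indicator 1 x :=
  rfl

theorem clopenIndicator_empty : clopenIndicator (∅ : Set X) isClopen_empty = 0 := by
  ext x
  simp

theorem clopenIndicator_union {A B : Set X} (hA : IsClopen A) (hB : IsClopen B)
    (hAB : Disjoint A B) :
    clopenIndicator (A ∪ B) (hA.union hB) = clopenIndicator A hA + clopenIndicator B hB := by
  ext x
  simp [indicator_union_of_disjoint hAB]

theorem sum_clopenIndicator {ι : Type*} [Fintype ι] {A : ι → Set X} (hA : ∀ i, IsClopen (A i))
    (hd : Pairwise (Disjoint on A)) :
    ∑ i, clopenIndicator (A i) (hA i) =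
      clopenIndicator (⋃ i, A i) (isClopen_iUnion_of_finite hA) := by
  ext x
  simp only [ContinuousMap.coe_sum, Finset.sum_apply, clopenIndicator_apply]
  rw [← Finset.indicator_biUnion_apply _ _ fun i _ j _ hij => hd hij]
  simp only [Finset.mem_univ, iUnion_true]

theorem clopenIndicator_comp_smul {G : Type*} [Group G] [MulAction G X] [ContinuousConstSMul G X]
    {A : Set X} (hA : IsClopen A) (g : G) :
    (clopenIndicator A hA).comp ⟨fun x => g⁻¹ • x, continuous_const_smul _⟩ =
      clopenIndicator (g • A) (hA.smul g) := by
  classical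
  ext x
  simp only [ContinuousMap.comp_apply, ContinuousMap.coe_mk, clopenIndicator_apply,
    indicator_apply, mem_smul_set_iff_inv_smul_mem, Pi.one_apply]

theorem ContinuousMap.eq_sum_clopenIndicator (f : C(X, ℕ)) {N : ℕ} (hN : ∀ x, f x ≤ N) :
    f = ∑ i ∈ Finset.range N,
      clopenIndicator (f ⁻¹' Ioi i) ((isClopen_discrete _).preimage f.continuous) := by
  classical
  ext x
  have hlayers : {i ∈ Finset.range N | i < f x} = Finset.range (f x) := by
    ext i
    simp only [Finset.mem_filter, Finset.mem_range]
    have := hN x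
    omega
  simp only [ContinuousMap.coe_sum, Finset.sum_apply, clopenIndicator_apply, indicator_apply]
  simp [Finset.sum_boole, hlayers]

end ClopenIndicator

section TypeSemigroup

variable {G X : Type*} [Group G] [TopologicalSpace X] [MulAction G X] [ContinuousConstSMul G X]

variable (G) in
/-- The algebraic order `[f] ≤ [g]` of `W(X,G)`, on representatives. -/
def TypeLE (f g : C(X, ℕ)) : Prop :=
  ∃ c : C(X, ℕ), TypeRel G (f + c) g

theorem TypeRel.refl (f : C(X, ℕ)) : TypeRel G f f :=
  ⟨1, ![f], ![1], by simp, by ext; simp⟩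

theorem TypeRel.add {f f' g g' : C(X, ℕ)} (hf : TypeRel G f f') (hg : TypeRel G g g') :
    TypeRel G (f + g) (f' + g') := by
  obtain ⟨n, h, s, rfl, rfl⟩ := hf
  obtain ⟨m, h', s', rfl, rfl⟩ := hg
  refine ⟨n + m, Fin.append h h', Fin.append s s', ?_, ?_⟩ <;>
    simp [Fin.sum_univ_add, Fin.append_left, Fin.append_right]

theorem TypeLE.add {f f' g g' : C(X, ℕ)} (hf : TypeLE G f f') (hg : TypeLE G g g') :
    TypeLE G (f + g) (f' + g') := by
  obtain ⟨c, hc⟩ := hf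
  obtain ⟨d, hd⟩ := hg
  exact ⟨c + d, add_add_add_comm f g c d ▸ hc.add hd⟩

theorem TypeLE.sum {ι : Type*} (s : Finset ι) {f g : ι → C(X, ℕ)}
    (h : ∀ i ∈ s, TypeLE G (f i) (g i)) : TypeLE G (∑ i ∈ s, f i) (∑ i ∈ s, g i) := by
  classical
  induction s using Finset.induction_on with
  | empty => exact ⟨0, by simpa using TypeRel.refl 0⟩
  | insert i s hi ih =>
    rw [Finset.sum_insert hi, Finset.sum_insert hi]
    exact (h i (s.mem_insert_self i)).add (ih fun j hj => h j (Finset.mem_insert_of_mem hj))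

end TypeSemigroup

section ParadoxicalComparison

variable {G X : Type*} [Group G] [TopologicalSpace X] [CompactSpace X] [T2Space X]
  [TotallyDisconnectedSpace X] [MulAction G X] [ContinuousConstSMul G X]

theorem Subeq.exists_typeRel_clopenIndicator {A O : Set X} (hA : IsClopen A)
    (hAO : Subeq G A O) :
    ∃ (B : Set X) (hB : IsClopen B), B ⊆ O ∧
      TypeRel G (clopenIndicator A hA) (clopenIndicator B hB) := by
  obtain ⟨n, U, g, hU, hAU, hgUO, hgU⟩ := hAO
  have hAc : IsCompact A := hA.isClosed.isCompact
  obtain ⟨V, hV, hVU, hAV, hVd⟩ :=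
    hAc.exists_pairwise_disjoint_isClopen_subset_of_subset_iUnion hU hAU
  have hP : ∀ i, IsClopen (A ∩ V i) := fun i => hA.inter (hV i)
  have hPU : ∀ i, A ∩ V i ⊆ U i := fun i => inter_subset_right.trans (hVU i)
  have hPd : Pairwise (Disjoint on fun i => A ∩ V i) := fun i j hij =>
    (hVd hij).mono inter_subset_right inter_subset_right
  have hgPd : Pairwise (Disjoint on fun i => g i • (A ∩ V i)) := fun i j hij =>
    (hgU hij).mono (smul_set_mono (hPU i)) (smul_set_mono (hPU j))
  refine ⟨⋃ i, g i • (A ∩ V i), isClopen_iUnion_of_finite fun i => (hP i).smul (g i),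
    iUnion_subset fun i => (smul_set_mono (hPU i)).trans (hgUO i),
    n, fun i => clopenIndicator _ (hP i), g, ?_, ?_⟩
  · rw [sum_clopenIndicator hP hPd]
    congr 1
    rw [← inter_iUnion, inter_eq_left.mpr hAV]
  · simp only [clopenIndicator_comp_smul]
    exact sum_clopenIndicator (fun i => (hP i).smul (g i)) hgPd

theorem ParadoxicalComparison.typeLE_two_clopenIndicator
    (hpc : ParadoxicalComparison G (X := X)) {A : Set X} (hA : IsClopen A) :
    TypeLE G (clopenIndicator A hA + clopenIndicator A hA) (clopenIndicator A hA) := by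
  rcases A.eq_empty_or_nonempty with rfl | hne
  · exact ⟨0, by simpa [clopenIndicator_empty] using TypeRel.refl 0⟩
  obtain ⟨O₁, O₂, -, -, -, -, hO₁A, hO₂A, hO, hAO₁, hAO₂⟩ :=
    hpc A hA.isOpen hne A hA.isClosed subset_rfl
  obtain ⟨B₁, hB₁, hB₁O₁, h₁⟩ := hAO₁.exists_typeRel_clopenIndicator hA
  obtain ⟨B₂, hB₂, hB₂O₂, h₂⟩ := hAO₂.exists_typeRel_clopenIndicator hA
  have hBA : B₁ ∪ B₂ ⊆ A := union_subset (hB₁O₁.trans hO₁A) (hB₂O₂.trans hO₂A)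
  have hB : IsClopen (A \ (B₁ ∪ B₂)) := hA.diff (hB₁.union hB₂)
  refine ⟨clopenIndicator _ hB, ?_⟩
  convert (h₁.add h₂).add (TypeRel.refl (clopenIndicator _ hB)) using 1
  rw [← clopenIndicator_union hB₁ hB₂ (hO.mono hB₁O₁ hB₂O₂),
    ← clopenIndicator_union _ hB disjoint_sdiff_right]
  congr 1
  exact (union_sdiff_cancel hBA).symm

end ParadoxicalComparison

theorem paradoxicalComparison_typeSemigroup_purely_infinite_general
    {G X : Type*} [Group G] [TopologicalSpace X] [CompactSpace X]
    [TopologicalSpace.MetrizableSpace X] [TotallyDisconnectedSpace X]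
    [MulAction G X] [ContinuousConstSMul G X]
    (hpc : ParadoxicalComparison G (X := X)) :
    ∀ f : C(X, ℕ), ∃ c : C(X, ℕ), TypeRel G (f + f + c) f := by
  intro f
  obtain ⟨N, hN⟩ := (isCompact_range f.continuous).bddAbove
  rw [f.eq_sum_clopenIndicator fun x => hN ⟨x, rfl⟩, ← Finset.sum_add_distrib]
  exact TypeLE.sum _ fun i _ => hpc.typeLE_two_clopenIndicator _

/-- Paradoxical comparison implies that the type semigroup is purely infinite:
`2[f] ≤ [f]` in the algebraic order for every `[f] ∈ W(X,G)`. -/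
theorem paradoxicalComparison_typeSemigroup_purely_infinite
    {G X : Type*} [Group G] [TopologicalSpace X] [CompactSpace X]
    [TopologicalSpace.MetrizableSpace X] [TotallyDisconnectedSpace X]
    [MulAction G X] [ContinuousConstSMul G X]
    [MeasurableSpace X] [BorelSpace X]
    (hperf : Perfect (Set.univ : Set X))
    (hnomeas : ¬ ∃ μ : Measure X, (∀ (g : G) (A : Set X), μ (g • A) = μ A) ∧
        ∃ O : Set X, IsClopen O ∧ 0 < μ O ∧ μ O < ⊤)
    (hpc : ParadoxicalComparison G (X := X)) :
    ∀ f : C(X, ℕ), ∃ c : C(X, ℕ), TypeRel G (f + f + c) f :=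
  paradoxicalComparison_typeSemigroup_purely_infinite_general hpc
end

section
/- Let G be a group acting by homeomorphisms on a compact Hausdorff space X with paradoxical comparison. Then for every n ≥ 1 and every nonempty open set O the relation (O,...,O) ≺ O (n copies) holds: for every closed F ⊆ O there exist pairwise disjoint nonempty open subsets O₁,...,Oₙ of O with F ≺ Oᵢ for all i. -/
/-!
Subequivalence is transitive: refine a cover witnessing `F ≺ M` by the preimages of a cover
witnessing `M ≺ O`. By the shrinking lemma, `F ≺ M` for closed `F` even gives `F ≺ K` for a
closed `K ⊆ M`. So, having split `O` into disjoint `O₁, O₂` with `F ≺ O₁` and `F ≺ O₂`, one may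
split `O₂` again using `K` in place of `F`; after `n` splits `O` contains `n` disjoint open sets,
each of which `F` is subequivalent to.
-/

open Pointwise

section Subeq

variable {G X : Type*} [Group G] [MulAction G X] [TopologicalSpace X]

lemma subeq_of_finite {ι : Type*} [Finite ι] {F O : Set X} (U : ι → Set X) (g : ι → G)
    (hU : ∀ i, IsOpen (U i)) (hFU : F ⊆ ⋃ i, U i) (hUO : ∀ i, g i • U i ⊆ O)
    (hdisj : Pairwise fun i j => Disjoint (g i • U i) (g j • U j)) : Subeq G F O := by
  obtain ⟨n, ⟨e⟩⟩ := Finite.exists_equiv_fin ι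
  refine ⟨n, U ∘ e.symm, g ∘ e.symm, fun _ => hU _, ?_, fun _ => hUO _,
    fun _ _ hkl => hdisj (e.symm.injective.ne hkl)⟩
  rwa [Function.comp_def, e.symm.surjective.iUnion_comp]

theorem Subeq.trans [ContinuousConstSMul G X] {F M O : Set X} (hFM : Subeq G F M)
    (hMO : Subeq G M O) : Subeq G F O := by
  obtain ⟨n, U, g, hUo, hFU, hUM, hUdisj⟩ := hFM
  obtain ⟨m, W, h, hWo, hMW, hWO, hWdisj⟩ := hMO
  have hpiece : ∀ i j, (h j * g i) • (U i ∩ (g i)⁻¹ • W j) = h j • (g i • U i ∩ W j) := by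
    intro i j
    rw [mul_smul, Set.smul_set_inter, smul_inv_smul]
  refine subeq_of_finite (fun p : Fin n × Fin m => U p.1 ∩ (g p.1)⁻¹ • W p.2)
    (fun p => h p.2 * g p.1) (fun p => (hUo _).inter ((hWo _).smul _)) ?_ ?_ ?_
  · intro x hx
    obtain ⟨i, hi⟩ := Set.mem_iUnion.1 (hFU hx)
    obtain ⟨j, hj⟩ := Set.mem_iUnion.1 (hMW (hUM i (Set.smul_mem_smul_set hi)))
    exact Set.mem_iUnion.2 ⟨(i, j), hi, Set.mem_inv_smul_set_iff.2 hj⟩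
  · rintro ⟨i, j⟩
    rw [hpiece]
    exact (Set.smul_set_mono Set.inter_subset_right).trans (hWO j)
  · rintro ⟨i, j⟩ ⟨i', j'⟩ hne
    change Disjoint ((h j * g i) • _) ((h j' * g i') • _)
    rw [hpiece, hpiece]
    rcases eq_or_ne j j' with rfl | hj
    · have hi : i ≠ i' := fun hi => hne (by rw [hi])
      exact Set.disjoint_smul_set.2
        ((hUdisj hi).mono Set.inter_subset_left Set.inter_subset_left)
    · exact ((hWdisj hj).mono (Set.smul_set_mono Set.inter_subset_right)
        (Set.smul_set_mono Set.inter_subset_right))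

theorem Subeq.exists_isClosed_subset [NormalSpace X] [ContinuousConstSMul G X] {F M : Set X}
    (hF : IsClosed F) (hFM : Subeq G F M) : ∃ K, IsClosed K ∧ K ⊆ M ∧ Subeq G F K := by
  obtain ⟨n, U, g, hUo, hFU, hUM, hUdisj⟩ := hFM
  obtain ⟨V, hFV, hVo, hVU⟩ :=
    exists_subset_iUnion_closure_subset hF hUo (fun _ _ => Set.toFinite _) hFU
  refine ⟨⋃ i, g i • closure (V i), isClosed_iUnion_of_finite fun i => isClosed_closure.smul _,
    Set.iUnion_subset fun i => (Set.smul_set_mono (hVU i)).trans (hUM i),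
    n, V, g, hVo, hFV, fun i => ?_, fun i j hij => ?_⟩
  · exact (Set.smul_set_mono subset_closure).trans (Set.subset_iUnion_of_subset i subset_rfl)
  · exact (hUdisj hij).mono (Set.smul_set_mono (subset_closure.trans (hVU i)))
      (Set.smul_set_mono (subset_closure.trans (hVU j)))

end Subeq

theorem ParadoxicalComparison.exists_pairwise_disjoint_subeq {G X : Type*} [Group G]
    [TopologicalSpace X] [NormalSpace X] [MulAction G X] [ContinuousConstSMul G X]
    (hpc : ParadoxicalComparison G (X := X)) (n : ℕ) {O F : Set X} (hO : IsOpen O)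
    (hOne : O.Nonempty) (hF : IsClosed F) (hFO : F ⊆ O) :
    ∃ Os : Fin n → Set X, (∀ i, IsOpen (Os i)) ∧ (∀ i, (Os i).Nonempty) ∧
      (∀ i, Os i ⊆ O) ∧ (Pairwise fun i j => Disjoint (Os i) (Os j)) ∧
      ∀ i, Subeq G F (Os i) := by
  induction n generalizing O F with
  | zero => exact ⟨Fin.elim0, nofun, nofun, nofun, nofun, nofun⟩
  | succ n ih =>
    obtain ⟨O₁, O₂, hO₁, hO₂, hO₁ne, hO₂ne, hO₁O, hO₂O, h12, hFO₁, hFO₂⟩ :=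
      hpc O hO hOne F hF hFO
    obtain ⟨K, hK, hKO₂, hFK⟩ := hFO₂.exists_isClosed_subset hF
    obtain ⟨Os, hOs, hOsne, hOsO₂, hOsdisj, hKOs⟩ := ih hO₂ hO₂ne hK hKO₂
    refine ⟨Fin.cons O₁ Os, ?_, ?_, ?_, ?_, ?_⟩
    · exact Fin.forall_fin_succ.2 ⟨hO₁, hOs⟩
    · exact Fin.forall_fin_succ.2 ⟨hO₁ne, hOsne⟩
    · exact Fin.forall_fin_succ.2 ⟨hO₁O, fun i => (hOsO₂ i).trans hO₂O⟩
    · refine pairwise_fin_succ_iff.2 ⟨fun i => ?_, fun i => ?_, hOsdisj⟩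
      · exact (h12.mono_right (hOsO₂ i)).symm
      · exact h12.mono_right (hOsO₂ i)
    · exact Fin.forall_fin_succ.2 ⟨hFO₁, fun i => hFK.trans (hKOs i)⟩

theorem paradoxicalComparison_n_fold
    {G X : Type*} [Group G] [TopologicalSpace X] [CompactSpace X] [T2Space X]
    [MulAction G X] [ContinuousConstSMul G X]
    (hpc : ParadoxicalComparison G (X := X)) :
    ∀ n : ℕ, 1 ≤ n → ∀ O : Set X, IsOpen O → O.Nonempty →
      ∀ F : Set X, IsClosed F → F ⊆ O →
        ∃ Os : Fin n → Set X, (∀ i, IsOpen (Os i)) ∧ (∀ i, (Os i).Nonempty) ∧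
          (∀ i, Os i ⊆ O) ∧ (Pairwise fun i j => Disjoint (Os i) (Os j)) ∧
          ∀ i, Subeq G F (Os i) :=
  fun n _ _ hO hOne _ hF hFO => hpc.exists_pairwise_disjoint_subeq n hO hOne hF hFO
end
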